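/- Let A be a commutative ℚ-algebra with derivation d, let N ≥ 1, and let z, z̄ ∈ A[w,w⁻¹] have supports contained in {−N, …, 1} and {−1, 0, …, N} respectively, satisfying the string equation {z, z̄} = 1. For 1 ≤ k ≤ N+1 set H̄_k := (z̄^k)₋ + (1/2)·(z̄^k)₀. Then {H̄_k, z} has support contained in {−N, …, 1}; i.e., assuming the string equation, the t̄_k-flows with 1 ≤ k ≤ N+1 preserve the polynomial reduction of z. -/

import Mathlib

open LaurentPolynomial

/-- The derivation `d : A → A` extended coefficientwise to Laurent polynomials
(so that `d w = 0`). -/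
noncomputable def dmap {A : Type*} [CommRing A] (d : A → A) (f : LaurentPolynomial A) :
    LaurentPolynomial A :=
  f.coeff.sum fun n a => C (d a) * T n

/-- The formal derivative `∂_w` on Laurent polynomials. -/
noncomputable def wderiv {A : Type*} [CommRing A] (f : LaurentPolynomial A) :
    LaurentPolynomial A :=
  f.coeff.sum fun n a => C (n • a) * T (n - 1)

/-- The Lax–Poisson bracket `{f,g} = w·(∂_w f)·(d g) − w·(d f)·(∂_w g)`. -/
noncomputable def lax {A : Type*} [CommRing A] (d : A → A) (f g : LaurentPolynomial A) :
    LaurentPolynomial A :=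
  T 1 * wderiv f * dmap d g - T 1 * dmap d f * wderiv g

/-- `f₊`, the strictly positive-degree part of a Laurent polynomial. -/
noncomputable def posPart {A : Type*} [CommRing A] (f : LaurentPolynomial A) :
    LaurentPolynomial A :=
  f.coeff.sum fun n a => if 0 < n then C a * T n else 0

/-- `f₋`, the strictly negative-degree part of a Laurent polynomial. -/
noncomputable def negPart {A : Type*} [CommRing A] (f : LaurentPolynomial A) :
    LaurentPolynomial A :=
  f.coeff.sum fun n a => if n < 0 then C a * T n else 0

/-!
Write `θ = w ∂_w` and `D` for the coefficientwise extension of `d`. Both are derivations of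
`A[w,w⁻¹]` that are diagonal in the monomial basis, and `{f,g} = θf·Dg − Df·θg`; hence the bracket
is a derivation in each argument and the support of `{f,g}` lies in `supp f + supp g`.

Since `z̄^k = (z̄^k)₋ + (z̄^k)₊ + (z̄^k)₀`, we have `H̄_k = z̄^k − Q` with `Q = (z̄^k)₊ + ½(z̄^k)₀`
supported in degrees `≥ 0`. The string equation gives `{z̄^k, z} = −k z̄^(k−1)`, whose support lies
in degrees `≥ −(k−1) ≥ −N`, and `{Q, z}` lives in degrees `≥ 0 − N`; this is the lower bound.
The upper bound is immediate: `H̄_k` lives in degrees `≤ 0` and `z` in degrees `≤ 1`.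
-/

open scoped Pointwise

namespace LaurentPolynomial

variable {A : Type*} [CommRing A]

lemma C_mul_T_mul_C_mul_T (a b : A) (m n : ℤ) :
    C a * T m * (C b * T n) = C (a * b) * T (m + n) := by
  rw [mul_mul_mul_comm, ← map_mul, ← T_add]

lemma ite_C_mul_T (p : Prop) [Decidable p] (a : A) (n : ℤ) :
    (if p then C a * T n else 0) = C (if p then a else 0) * T n := by
  split_ifs <;> simp

lemma coeff_sum_C_mul_T {φ : ℤ → A → A} (hφ : ∀ n, φ n 0 = 0) (f : A[T;T⁻¹]) (m : ℤ) :
    (f.coeff.sum fun n a => C (φ n a) * T n).coeff m = φ m (f.coeff m) := by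
  simp only [← single_eq_C_mul_T, AddMonoidAlgebra.coeff_finsuppSum,
    AddMonoidAlgebra.coeff_single, Finsupp.sum_apply, Finsupp.single_apply, Finsupp.sum_ite_eq']
  split_ifs with h
  · rfl
  · rw [Finsupp.notMem_support_iff.mp h, hφ]

lemma le_of_mem_support_pow {f : A[T;T⁻¹]} {a : ℤ} (hf : ∀ n ∈ f.coeff.support, a ≤ n) (m : ℕ) :
    ∀ n ∈ (f ^ m).coeff.support, m * a ≤ n := by
  induction m with
  | zero =>
    intro n hn
    rw [pow_zero] at hn
    have hn0 : n = 0 := by simpa using AddMonoidAlgebra.support_coeff_one_subset hn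
    simp [hn0]
  | succ m ih =>
    intro n hn
    rw [pow_succ] at hn
    obtain ⟨i, hi, j, hj, rfl⟩ :=
      Finset.mem_add.mp (AddMonoidAlgebra.support_coeff_mul_subset _ _ hn)
    push_cast
    linarith [ih i hi, hf j hj]

section Coeffwise

variable (ψ : ℤ → A →+ A)

noncomputable def coeffwiseHom : A[T;T⁻¹] →+ A[T;T⁻¹] where
  toFun f := f.coeff.sum fun n a => C (ψ n a) * T n
  map_zero' := by simp
  map_add' f g := by
    ext m
    simp only [AddMonoidAlgebra.coeff_add, Finsupp.add_apply,
      coeff_sum_C_mul_T fun n => map_zero (ψ n), map_add]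

lemma coeffwiseHom_apply (f : A[T;T⁻¹]) :
    coeffwiseHom ψ f = f.coeff.sum fun n a => C (ψ n a) * T n :=
  rfl

lemma coeffwiseHom_C_mul_T (a : A) (n : ℤ) : coeffwiseHom ψ (C a * T n) = C (ψ n a) * T n := by
  rw [coeffwiseHom_apply, ← single_eq_C_mul_T, AddMonoidAlgebra.coeff_single,
    Finsupp.sum_single_index (by simp)]

lemma support_coeffwiseHom_subset (f : A[T;T⁻¹]) :
    (coeffwiseHom ψ f).coeff.support ⊆ f.coeff.support := by
  intro m
  simp only [Finsupp.mem_support_iff, coeffwiseHom_apply,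
    coeff_sum_C_mul_T fun n => map_zero (ψ n)]
  exact mt fun h => by rw [h, map_zero]

lemma coeffwiseHom_mul (hψ : ∀ m n a b, ψ (m + n) (a * b) = a * ψ n b + ψ m a * b)
    (f g : A[T;T⁻¹]) : coeffwiseHom ψ (f * g) = f * coeffwiseHom ψ g + coeffwiseHom ψ f * g := by
  induction f using LaurentPolynomial.induction_on' with
  | add p q hp hq => simp only [add_mul, map_add, hp, hq]; ring
  | C_mul_T m a =>
    induction g using LaurentPolynomial.induction_on' with
    | add p q hp hq => simp only [mul_add, map_add, hp, hq]; ring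
    | C_mul_T n b => simp only [coeffwiseHom_C_mul_T, C_mul_T_mul_C_mul_T, hψ, map_add, add_mul]

noncomputable def coeffwiseDerivation
    (hψ : ∀ m n a b, ψ (m + n) (a * b) = a * ψ n b + ψ m a * b) :
    Derivation ℤ A[T;T⁻¹] A[T;T⁻¹] :=
  Derivation.mk' (coeffwiseHom ψ).toIntLinearMap fun f g => by
    simp only [AddMonoidHom.coe_toIntLinearMap, smul_eq_mul, coeffwiseHom_mul ψ hψ, mul_comm g]

@[simp]
lemma coeffwiseDerivation_apply (hψ : ∀ m n a b, ψ (m + n) (a * b) = a * ψ n b + ψ m a * b)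
    (f : A[T;T⁻¹]) : coeffwiseDerivation ψ hψ f = coeffwiseHom ψ f :=
  rfl

end Coeffwise

noncomputable def eulerDerivation : Derivation ℤ A[T;T⁻¹] A[T;T⁻¹] :=
  coeffwiseDerivation (fun n => n • AddMonoidHom.id A) fun m n a b => by
    simp only [AddMonoidHom.smul_apply, AddMonoidHom.id_apply]
    rw [add_smul, mul_smul_comm, smul_mul_assoc, add_comm]

end LaurentPolynomial

section LaxBracket

variable {A : Type*} [CommRing A]

lemma eulerDerivation_apply (f : A[T;T⁻¹]) : eulerDerivation f = T 1 * wderiv f := by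
  simp only [eulerDerivation, coeffwiseDerivation_apply, coeffwiseHom_apply, wderiv,
    Finsupp.mul_sum, mul_left_comm (T 1), ← T_add, add_sub_cancel]
  rfl

lemma support_eulerDerivation_subset (f : A[T;T⁻¹]) :
    (eulerDerivation f).coeff.support ⊆ f.coeff.support :=
  support_coeffwiseHom_subset _ f

variable {d : A → A}

lemma dmap_eq_coeffwiseHom (hd_add : ∀ a b : A, d (a + b) = d a + d b) (f : A[T;T⁻¹]) :
    dmap d f = coeffwiseHom (fun _ => AddMonoidHom.mk' d hd_add) f :=
  rfl

lemma support_dmap_subset (hd_add : ∀ a b : A, d (a + b) = d a + d b) (f : A[T;T⁻¹]) :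
    (dmap d f).coeff.support ⊆ f.coeff.support :=
  support_coeffwiseHom_subset (fun _ => AddMonoidHom.mk' d hd_add) f

noncomputable def dmapDerivation (hd_add : ∀ a b : A, d (a + b) = d a + d b)
    (hd_mul : ∀ a b : A, d (a * b) = a * d b + d a * b) : Derivation ℤ A[T;T⁻¹] A[T;T⁻¹] :=
  coeffwiseDerivation (fun _ => AddMonoidHom.mk' d hd_add) fun _ _ => hd_mul

lemma dmapDerivation_apply (hd_add : ∀ a b : A, d (a + b) = d a + d b)
    (hd_mul : ∀ a b : A, d (a * b) = a * d b + d a * b) (f : A[T;T⁻¹]) :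
    dmapDerivation hd_add hd_mul f = dmap d f :=
  rfl

lemma lax_eq_eulerDerivation (f g : A[T;T⁻¹]) :
    lax d f g = eulerDerivation f * dmap d g - dmap d f * eulerDerivation g := by
  simp only [lax, eulerDerivation_apply]
  ring

lemma lax_comm (f g : A[T;T⁻¹]) : lax d f g = -lax d g f := by
  simp only [lax]
  ring

lemma lax_sub_left (hd_add : ∀ a b : A, d (a + b) = d a + d b) (f g h : A[T;T⁻¹]) :
    lax d (f - g) h = lax d f h - lax d g h := by
  simp only [lax_eq_eulerDerivation, map_sub, dmap_eq_coeffwiseHom hd_add]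
  ring

lemma lax_pow_left (hd_add : ∀ a b : A, d (a + b) = d a + d b)
    (hd_mul : ∀ a b : A, d (a * b) = a * d b + d a * b) (g f : A[T;T⁻¹]) (k : ℕ) :
    lax d (g ^ k) f = k • (g ^ (k - 1) * lax d g f) := by
  simp only [lax_eq_eulerDerivation, ← dmapDerivation_apply hd_add hd_mul,
    Derivation.leibniz_pow, smul_eq_mul, nsmul_eq_mul]
  ring

lemma support_lax_subset (hd_add : ∀ a b : A, d (a + b) = d a + d b) (f g : A[T;T⁻¹]) :
    (lax d f g).coeff.support ⊆ f.coeff.support + g.coeff.support := by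
  rw [lax_eq_eulerDerivation, AddMonoidAlgebra.coeff_sub]
  refine Finsupp.support_sub.trans (Finset.union_subset ?_ ?_)
  · exact (AddMonoidAlgebra.support_coeff_mul_subset _ _).trans
      (Finset.add_subset_add (support_eulerDerivation_subset f) (support_dmap_subset hd_add g))
  · exact (AddMonoidAlgebra.support_coeff_mul_subset _ _).trans
      (Finset.add_subset_add (support_dmap_subset hd_add f) (support_eulerDerivation_subset g))

end LaxBracket

section Parts

variable {A : Type*} [CommRing A]

lemma coeff_posPart (f : A[T;T⁻¹]) (m : ℤ) :
    (posPart f).coeff m = if 0 < m then f.coeff m else 0 := by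
  simp only [_root_.posPart, ite_C_mul_T]
  exact coeff_sum_C_mul_T (φ := fun n a => if 0 < n then a else (0 : A)) (fun _ => ite_self _) f m

lemma coeff_negPart (f : A[T;T⁻¹]) (m : ℤ) :
    (negPart f).coeff m = if m < 0 then f.coeff m else 0 := by
  simp only [_root_.negPart, ite_C_mul_T]
  exact coeff_sum_C_mul_T (φ := fun n a => if n < 0 then a else (0 : A)) (fun _ => ite_self _) f m

lemma negPart_add_posPart_add_C (f : A[T;T⁻¹]) : negPart f + posPart f + C (f.coeff 0) = f := by
  ext m
  simp only [AddMonoidAlgebra.coeff_add, Finsupp.add_apply, coeff_negPart, coeff_posPart, C_apply]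
  split_ifs <;> first | omega | simp_all

lemma nonpos_of_mem_support_negPart_add_C {f : A[T;T⁻¹]} {c : A} {n : ℤ}
    (hn : n ∈ (negPart f + C c).coeff.support) : n ≤ 0 := by
  contrapose! hn
  simp [coeff_negPart, C_apply, hn.not_gt, hn.ne']

lemma nonneg_of_mem_support_posPart_add_C {f : A[T;T⁻¹]} {c : A} {n : ℤ}
    (hn : n ∈ (posPart f + C c).coeff.support) : 0 ≤ n := by
  contrapose! hn
  simp [coeff_posPart, C_apply, hn.not_gt, hn.ne]

end Parts

theorem tbar_flow_preserves_poly_reduction_of_z_general {A : Type*} [CommRing A] [Algebra ℚ A]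
    (d : A → A)
    (hd_add : ∀ a b : A, d (a + b) = d a + d b)
    (hd_mul : ∀ a b : A, d (a * b) = a * d b + d a * b)
    (N k : ℕ) (hk2 : k ≤ N + 1)
    (z zbar : LaurentPolynomial A)
    (hz : z.coeff.support ⊆ Finset.Icc (-(N : ℤ)) 1)
    (hzbar : zbar.coeff.support ⊆ Finset.Icc (-1 : ℤ) (N : ℤ))
    (hstring : lax d z zbar = 1)
    (Hbk : LaurentPolynomial A)
    (hHbk : Hbk = negPart (zbar ^ k) + C ((1/2 : ℚ) • ((zbar ^ k).coeff (0 : ℤ)))) :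
    (lax d Hbk z).coeff.support ⊆ Finset.Icc (-(N : ℤ)) 1 := by
  set P := zbar ^ k
  set Q := posPart P + C ((1/2 : ℚ) • P.coeff 0)
  have hHbk_eq : Hbk = P - Q := by
    have hhalf : C ((1/2 : ℚ) • P.coeff 0) + C ((1/2 : ℚ) • P.coeff 0) = C (P.coeff 0) := by
      rw [← map_add, ← add_smul]
      norm_num
    linear_combination hHbk + negPart_add_posPart_add_C P + hhalf
  have hPz : lax d P z = k • (zbar ^ (k - 1) * -1) := by
    rw [lax_pow_left hd_add hd_mul, lax_comm, hstring]
  intro n hn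
  refine Finset.mem_Icc.mpr ⟨?_, ?_⟩
  · rw [hHbk_eq, lax_sub_left hd_add, hPz, AddMonoidAlgebra.coeff_sub] at hn
    rcases Finset.mem_union.mp (Finsupp.support_sub hn) with hn | hn
    · have hn' : n ∈ (zbar ^ (k - 1)).coeff.support := by
        simpa [mul_neg_one] using Finsupp.support_smul hn
      have hlow :=
        le_of_mem_support_pow (fun m hm => (Finset.mem_Icc.mp (hzbar hm)).1) (k - 1) n hn'
      omega
    · obtain ⟨i, hi, j, hj, rfl⟩ := Finset.mem_add.mp (support_lax_subset hd_add Q z hn)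
      linarith [nonneg_of_mem_support_posPart_add_C hi, (Finset.mem_Icc.mp (hz hj)).1]
  · obtain ⟨i, hi, j, hj, rfl⟩ := Finset.mem_add.mp (support_lax_subset hd_add Hbk z hn)
    linarith [(Finset.mem_Icc.mp (hz hj)).2, nonpos_of_mem_support_negPart_add_C (hHbk ▸ hi)]

/-- assuming the string equation `{z, z̄} = 1`, the `t̄_k`-flows with
`1 ≤ k ≤ N+1` preserve the polynomial reduction of `z`: with
`H̄_k = (z̄^k)₋ + (1/2)(z̄^k)₀`, the bracket `{H̄_k, z}` has support in `{−N,…,1}`. -/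
theorem tbar_flow_preserves_poly_reduction_of_z {A : Type*} [CommRing A] [Algebra ℚ A]
    (d : A → A)
    (hd_add : ∀ a b : A, d (a + b) = d a + d b)
    (hd_mul : ∀ a b : A, d (a * b) = a * d b + d a * b)
    (N k : ℕ) (hN : 1 ≤ N) (hk1 : 1 ≤ k) (hk2 : k ≤ N + 1)
    (z zbar : LaurentPolynomial A)
    (hz : z.coeff.support ⊆ Finset.Icc (-(N : ℤ)) 1)
    (hzbar : zbar.coeff.support ⊆ Finset.Icc (-1 : ℤ) (N : ℤ))
    (hstring : lax d z zbar = 1)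
    (Hbk : LaurentPolynomial A)
    (hHbk : Hbk = negPart (zbar ^ k) + C ((1/2 : ℚ) • ((zbar ^ k).coeff (0 : ℤ)))) :
    (lax d Hbk z).coeff.support ⊆ Finset.Icc (-(N : ℤ)) 1 :=
  tbar_flow_preserves_poly_reduction_of_z_general d hd_add hd_mul N k hk2 z zbar hz hzbar hstring
    Hbk hHbk
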